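/- (Smith's theorem.) Let Γ be a distance-regular graph of diameter d ≥ 2 with valency k ≥ 3, and suppose Γ is imprimitive, i.e., for some i with 1 ≤ i ≤ d the distance-i graph Γ_i is disconnected. Then Γ is bipartite or Γ is antipodal (that is, the relation on vertices 'being equal or at distance d' is an equivalence relation). -/

import Mathlib

open SimpleGraph

/-- A finite connected simple graph `G` is *distance-regular* with diameter `d` and
intersection numbers `b i` and `c i`: for any two vertices `u`, `v` at distance `i ≤ d`,
the vertex `v` has exactly `b i` neighbours at distance `i + 1` from `u` and exactly
`c i` neighbours at distance `i - 1` from `u`.  (This forces the conventions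
`c 0 = 0` and `b d = 0`.) -/
def IsDistRegular {V : Type*} [Fintype V] (G : SimpleGraph V) (d : ℕ) (b c : ℕ → ℕ) : Prop :=
  G.Connected ∧ G.diam = d ∧
    (∀ i ≤ d, ∀ u v : V, G.dist u v = i →
      {w : V | G.Adj v w ∧ G.dist u w = i + 1}.ncard = b i) ∧
    (∀ i ≤ d, ∀ u v : V, G.dist u v = i →
      {w : V | G.Adj v w ∧ G.dist u w = i - 1}.ncard = c i)

/-- The distance-`i` graph of `G`: same vertex set, two vertices adjacent iff they are
at distance exactly `i` in `G`. -/
def distGraph {V : Type*} (G : SimpleGraph V) (i : ℕ) : SimpleGraph V where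
  Adj u v := u ≠ v ∧ G.dist u v = i
  symm := by
    constructor
    intro u v h
    exact ⟨h.1.symm, by rw [SimpleGraph.dist_comm]; exact h.2⟩
  loopless := by
    constructor
    intro u h
    exact h.1 rfl

/-! In a distance-regular graph the number of vertices at distance `l` from `x` and `i` from `z`
depends only on `dist x z`: by induction on `l`, through the three-term recursion
`∑_{w ~ x} p_l(w, z) = b_{l-1} p_{l-1} + a_l p_l + c_{l+1} p_{l+1}` with `c_{l+1} ≠ 0`.
Hence whether `x` and `y` lie in one component of `Γ_i` depends only on `dist x y`; walking along
geodesics, the distances realised inside a component are the multiples of some `t ≥ 2`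
(`t = 1` would make `Γ_i` connected), and "`t` divides the distance" is an equivalence relation.

* `t = d`: the components of `Γ_i` are the antipodal classes.
* `t = 2`: no edge has both ends at the same distance from a vertex, so the parity of the distance
  from a fixed vertex is a 2-colouring.
* `2 < t < d`: a vertex has at most one neighbour at distance `t` from a given `x` and none when it
  lies itself at distance `t`, so `k = c_t + b_t ≤ c_{t+1} + b_{t-1} ≤ 2`. -/

open Finset

namespace SimpleGraph

variable {V : Type*} {G H : SimpleGraph V} {u v x y z : V}

theorem Connected.exists_adj_dist_eq (hG : G.Connected) {n : ℕ} (h : G.dist u v = n + 1) :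
    ∃ w, G.Adj v w ∧ G.dist u w = n := by
  obtain ⟨p, hp⟩ := hG.exists_walk_length_eq_dist v u
  cases p with
  | nil => simp at h
  | @cons _ w _ hadj q =>
    refine ⟨w, hadj, le_antisymm ?_ ?_⟩
    · have := dist_le q
      rw [Walk.length_cons, dist_comm, h] at hp
      rw [dist_comm]
      omega
    · have := hadj.diff_dist_adj (u := u)
      omega

theorem Connected.exists_dist_eq_dist_eq (hG : G.Connected) {l m : ℕ}
    (h : G.dist x z = l + m) : ∃ y, G.dist x y = l ∧ G.dist y z = m := by
  induction l generalizing x with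
  | zero => exact ⟨x, dist_self, by simpa using h⟩
  | succ l ih =>
    obtain ⟨w, hxw, hwz⟩ := hG.exists_adj_dist_eq (show G.dist z x = l + m + 1 by
      rw [dist_comm, h]; ring)
    obtain ⟨y, hwy, hyz⟩ := ih (by rwa [dist_comm])
    refine ⟨y, le_antisymm ?_ ?_, hyz⟩
    · have := hG.dist_triangle (u := x) (v := w) (w := y)
      rw [dist_eq_one_iff_adj.2 hxw] at this
      omega
    · have := hG.dist_triangle (u := x) (v := y) (w := z)
      omega

theorem Connected.reachable_of_dvd_dist (hG : G.Connected) {t : ℕ}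
    (hH : ∀ x y, G.dist x y = t → H.Reachable x y) (h : t ∣ G.dist x y) :
    H.Reachable x y := by
  obtain ⟨n, hn⟩ := h
  induction n generalizing y with
  | zero => rw [mul_zero, hG.dist_eq_zero_iff] at hn; exact hn ▸ .rfl
  | succ n ih =>
    obtain ⟨z, hxz, hzy⟩ := hG.exists_dist_eq_dist_eq (show G.dist x y = t * n + t by
      rw [hn, mul_add_one])
    exact (ih hxz).trans (hH z y hzy)

theorem Connected.dvd_dist_of_reachable (hG : G.Connected) {t : ℕ} (ht : 0 < t)
    (hH : ∀ x y, G.dist x y = t → H.Reachable x y)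
    (hmin : ∀ x y, H.Reachable x y → 0 < G.dist x y → t ≤ G.dist x y)
    (h : H.Reachable x y) : t ∣ G.dist x y := by
  induction hn : G.dist x y using Nat.strong_induction_on generalizing y with
  | _ n ih =>
    rcases Nat.eq_zero_or_pos n with rfl | hpos
    · exact dvd_zero t
    have htn := hmin x y h (hn ▸ hpos)
    obtain ⟨z, hxz, hzy⟩ := hG.exists_dist_eq_dist_eq (show G.dist x y = (n - t) + t by omega)
    have := ih (n - t) (by omega) (h.trans (hH z y hzy).symm) hxz
    simpa [Nat.sub_add_cancel (hn ▸ htn)] using this.add (dvd_refl t)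

theorem Connected.equivalence_eq_or_dist_eq_diam [Finite V] (hG : G.Connected)
    (htrans : ∀ x y z, G.diam ∣ G.dist x y → G.diam ∣ G.dist y z →
      G.diam ∣ G.dist x z) :
    Equivalence fun u v => u = v ∨ G.dist u v = G.diam := by
  have key : ∀ u v, (u = v ∨ G.dist u v = G.diam) ↔ G.diam ∣ G.dist u v := by
    intro u v
    have : Nonempty V := hG.nonempty
    have hle := G.dist_le_diam (connected_iff_ediam_ne_top.1 hG) (u := u) (v := v)
    rw [← hG.dist_eq_zero_iff]
    refine ⟨by rintro (h | h) <;> simp [h], fun h => ?_⟩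
    rcases Nat.eq_zero_or_pos (G.dist u v) with h0 | hpos
    · exact .inl h0
    · exact .inr (le_antisymm hle (Nat.le_of_dvd hpos h))
  refine ⟨fun u => .inl rfl, fun h => (key _ _).2 ?_, fun h₁ h₂ => (key _ _).2 ?_⟩
  · rw [dist_comm]; exact (key _ _).1 h
  · exact htrans _ _ _ ((key _ _).1 h₁) ((key _ _).1 h₂)

theorem Connected.not_adj_of_dist_eq_of_two_le (hG : G.Connected)
    (htrans : ∀ x y z, 2 ∣ G.dist x y → 2 ∣ G.dist y z → 2 ∣ G.dist x z)
    (hyz : G.dist x y = G.dist x z) (h2 : 2 ≤ G.dist x y) : ¬ G.Adj y z := by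
  intro hadj
  obtain ⟨w, hyw, hxw⟩ :=
    hG.exists_adj_dist_eq (show G.dist x y = (G.dist x y - 1) + 1 by omega)
  have hwz₁ := hG.dist_triangle (u := w) (v := y) (w := z)
  have hwz₂ := hG.dist_triangle (u := x) (v := w) (w := z)
  rw [dist_eq_one_iff_adj.2 hyw.symm, dist_eq_one_iff_adj.2 hadj] at hwz₁
  rcases (show G.dist w z = 1 ∨ G.dist w z = 2 by omega) with hwz | hwz
  · -- `w y z` is a triangle; the neighbour `v` of `w` towards `x` is at distance 2 from `y`, `z`
    obtain ⟨v, hwv, hxv⟩ :=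
      hG.exists_adj_dist_eq (show G.dist x w = (G.dist x y - 2) + 1 by omega)
    have hv : ∀ a, G.Adj w a → G.dist x a = G.dist x y → G.dist v a = 2 := by
      intro a hwa hxa
      have h₁ := hG.dist_triangle (u := v) (v := w) (w := a)
      have h₂ := hG.dist_triangle (u := x) (v := v) (w := a)
      rw [dist_eq_one_iff_adj.2 hwv.symm, dist_eq_one_iff_adj.2 hwa] at h₁
      omega
    have := htrans y v z (by rw [dist_comm, hv y hyw.symm rfl])
      (by rw [hv z (dist_eq_one_iff_adj.1 hwz) hyz.symm])
    rw [dist_eq_one_iff_adj.2 hadj] at this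
    omega
  · -- `2 ∣ dist w z`, but `dist x w` and `dist x z` have different parities
    have := htrans x w z
    have := htrans x z w
    rw [show G.dist z w = G.dist w z from dist_comm] at this
    omega

theorem Connected.not_adj_of_adj_of_adj (hG : G.Connected)
    (htrans : ∀ x y z, 2 ∣ G.dist x y → 2 ∣ G.dist y z → 2 ∣ G.dist x z)
    (hxu : G.dist u x = 3) (hxy : G.Adj x y) (hxz : G.Adj x z) : ¬ G.Adj y z := by
  intro hyz
  -- two vertices of the triangle `x y z` have the same distance `≥ 2` from `u`
  have := hxy.diff_dist_adj (u := u)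
  have := hxz.diff_dist_adj (u := u)
  have := hyz.diff_dist_adj (u := u)
  by_cases hy : G.dist u y = 3
  · exact hG.not_adj_of_dist_eq_of_two_le htrans (hxu.trans hy.symm) (by omega) hxy
  by_cases hz : G.dist u z = 3
  · exact hG.not_adj_of_dist_eq_of_two_le htrans (hxu.trans hz.symm) (by omega) hxz
  exact hG.not_adj_of_dist_eq_of_two_le (x := u) htrans (by omega) (by omega) hyz

theorem Connected.colorable_two_of_even_dist_transitive (hG : G.Connected) (hxu : G.dist u x = 3)
    (htrans : ∀ x y z, 2 ∣ G.dist x y → 2 ∣ G.dist y z → 2 ∣ G.dist x z) :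
    G.Colorable 2 := by
  have hne : ∀ y z, G.Adj y z → G.dist x y ≠ G.dist x z := by
    intro y z hyz h
    rcases (show G.dist x y = 0 ∨ G.dist x y = 1 ∨ 2 ≤ G.dist x y by omega) with h0 | h1 | h2
    · rw [hG.dist_eq_zero_iff] at h0
      subst h0
      rw [dist_self, eq_comm, hG.dist_eq_zero_iff] at h
      exact hyz.ne h
    · exact hG.not_adj_of_adj_of_adj htrans hxu (dist_eq_one_iff_adj.1 h1)
        (dist_eq_one_iff_adj.1 (h.symm.trans h1)) hyz
    · exact hG.not_adj_of_dist_eq_of_two_le htrans h h2 hyz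
  refine ⟨Coloring.mk (fun v => ⟨G.dist x v % 2, Nat.mod_lt _ two_pos⟩)
    fun {y z} hyz heq => ?_⟩
  have := hne y z hyz
  have := hyz.diff_dist_adj (u := x)
  simp only [Fin.mk.injEq] at heq
  omega

/-- For a distance-regular graph, the intersection number `p^h_{l i}` with `h = G.dist x z`. -/
noncomputable def interCount (G : SimpleGraph V) [Fintype V] (l i : ℕ) (x z : V) : ℕ :=
  #{y | G.dist x y = l ∧ G.dist z y = i}

def DistInvariant (G : SimpleGraph V) (f : V → V → ℕ) : Prop :=
  ∀ ⦃x z x' z' : V⦄, G.dist x z = G.dist x' z' → f x z = f x' z'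

theorem DistInvariant.exists_eq_comp {f : V → V → ℕ} (hf : G.DistInvariant f) :
    ∃ P : ℕ → ℕ, ∀ x z, f x z = P (G.dist x z) :=
  ⟨Function.extend (fun p : V × V => G.dist p.1 p.2) (fun p => f p.1 p.2) 0, fun x z =>
    (Function.FactorsThrough.extend_apply (f := fun p : V × V => G.dist p.1 p.2)
      (g := fun p => f p.1 p.2) (fun _ _ h => hf h) 0 (x, z)).symm⟩

end SimpleGraph

namespace IsDistRegular

open SimpleGraph
open scoped Classical

variable {V : Type*} [Fintype V] {G : SimpleGraph V} {d : ℕ} {b c : ℕ → ℕ} {u v x y : V}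
  {i j l m t : ℕ}

theorem connected (hG : IsDistRegular G d b c) : G.Connected := hG.1

theorem diam_eq (hG : IsDistRegular G d b c) : G.diam = d := hG.2.1

theorem dist_le (hG : IsDistRegular G d b c) (u v : V) : G.dist u v ≤ d := by
  have : Nonempty V := hG.connected.nonempty
  exact hG.diam_eq ▸ G.dist_le_diam (connected_iff_ediam_ne_top.1 hG.connected)

theorem exists_dist_eq (hG : IsDistRegular G d b c) (hj : j ≤ d) :
    ∃ u v : V, G.dist u v = j := by
  have : Nonempty V := hG.connected.nonempty
  obtain ⟨u, w, huw⟩ := G.exists_dist_eq_diam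
  obtain ⟨v, huv, -⟩ := hG.connected.exists_dist_eq_dist_eq
    (show G.dist u w = j + (d - j) by rw [huw, hG.diam_eq]; omega)
  exact ⟨u, v, huv⟩

theorem card_adj_dist_succ (hG : IsDistRegular G d b c) (h : G.dist u v = m) :
    #{w | G.Adj v w ∧ G.dist u w = m + 1} = b m := by
  rw [← hG.2.2.1 m (h ▸ hG.dist_le u v) u v h, Set.ncard_eq_toFinset_card']
  simp

theorem card_adj_dist_pred (hG : IsDistRegular G d b c) (h : G.dist u v = m) :
    #{w | G.Adj v w ∧ G.dist u w = m - 1} = c m := by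
  rw [← hG.2.2.2 m (h ▸ hG.dist_le u v) u v h, Set.ncard_eq_toFinset_card']
  simp

theorem card_adj (hG : IsDistRegular G d b c) (v : V) : #{w | G.Adj v w} = b 0 := by
  rw [← hG.card_adj_dist_succ (SimpleGraph.dist_self (v := v))]
  simp

/-- The middle value is the intersection number `a m = k - b m - c m`; for `m = 0` the truncated
subtraction gives `0`, as it should. -/
theorem card_adj_dist (hG : IsDistRegular G d b c) (h : G.dist u v = m) (j : ℕ) :
    #{w | G.Adj v w ∧ G.dist u w = j} =
      if j + 1 = m then c m else if j = m then b 0 - b m - c m else if j = m + 1 then b m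
      else 0 := by
  split_ifs with h₁ h₂ h₃
  · rw [← hG.card_adj_dist_pred h, ← h₁, Nat.add_sub_cancel]
  · subst h₂
    rcases Nat.eq_zero_or_pos j with rfl | hj
    · rw [hG.connected.dist_eq_zero_iff] at h
      subst h
      rw [Nat.sub_self, Nat.zero_sub]
      exact card_eq_zero.2 (filter_eq_empty_iff.2 fun w _ ⟨hvw, hw⟩ =>
        hvw.ne (hG.connected.dist_eq_zero_iff.1 hw))
    have hsplit : #{w | G.Adj v w} = #{w | G.Adj v w ∧ G.dist u w = j - 1} +
        #{w | G.Adj v w ∧ G.dist u w = j} + #{w | G.Adj v w ∧ G.dist u w = j + 1} := by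
      simp only [card_filter, ← sum_add_distrib]
      refine sum_congr rfl fun w _ => ?_
      by_cases hvw : G.Adj v w
      · have := hvw.diff_dist_adj (u := u)
        simp only [hvw, true_and]
        split_ifs <;> omega
      · simp [hvw]
    rw [hG.card_adj v, hG.card_adj_dist_pred h, hG.card_adj_dist_succ h] at hsplit
    omega
  · rw [h₃, hG.card_adj_dist_succ h]
  · refine card_eq_zero.2 (filter_eq_empty_iff.2 fun w _ ⟨hvw, hw⟩ => ?_)
    have := hvw.diff_dist_adj (u := u)
    omega

theorem c_pos (hG : IsDistRegular G d b c) (hj : 1 ≤ j) (hjd : j ≤ d) : 0 < c j := by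
  obtain ⟨u, v, huv⟩ := hG.exists_dist_eq hjd
  obtain ⟨w, hvw, huw⟩ :=
    hG.connected.exists_adj_dist_eq (show G.dist u v = (j - 1) + 1 by omega)
  rw [← hG.card_adj_dist_pred huv]
  exact card_pos.2 ⟨w, by simp [hvw, huw]⟩

theorem c_le_succ (hG : IsDistRegular G d b c) (hj : 1 ≤ j) (hjd : j + 1 ≤ d) :
    c j ≤ c (j + 1) := by
  obtain ⟨u, v, huv⟩ := hG.exists_dist_eq hjd
  obtain ⟨w, huw, hwv⟩ := hG.connected.exists_dist_eq_dist_eq (show G.dist u v = 1 + j by omega)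
  rw [← hG.card_adj_dist_pred hwv, ← hG.card_adj_dist_pred huv]
  refine card_le_card fun y => ?_
  simp only [mem_filter, mem_univ, true_and]
  rintro ⟨hvy, hwy⟩
  have := hG.connected.dist_triangle (u := u) (v := w) (w := y)
  have := hvy.diff_dist_adj (u := u)
  exact ⟨hvy, by omega⟩

theorem b_succ_le (hG : IsDistRegular G d b c) (hjd : j + 1 ≤ d) : b (j + 1) ≤ b j := by
  obtain ⟨u, v, huv⟩ := hG.exists_dist_eq hjd
  obtain ⟨w, huw, hwv⟩ := hG.connected.exists_dist_eq_dist_eq (show G.dist u v = 1 + j by omega)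
  rw [← hG.card_adj_dist_succ hwv, ← hG.card_adj_dist_succ huv]
  refine card_le_card fun y => ?_
  simp only [mem_filter, mem_univ, true_and]
  rintro ⟨hvy, huy⟩
  have := hG.connected.dist_triangle (u := u) (v := w) (w := y)
  have := hvy.diff_dist_adj (u := w)
  exact ⟨hvy, by omega⟩

theorem distInvariant_sum_adj (hG : IsDistRegular G d b c) {f : V → V → ℕ}
    (hf : G.DistInvariant f) : G.DistInvariant fun x z => ∑ w with G.Adj x w, f w z := by
  obtain ⟨P, hP⟩ := hf.exists_eq_comp
  have key : ∀ x z, ∑ w with G.Adj x w, f w z =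
      ∑ j ∈ range (d + 1), #{w | G.Adj x w ∧ G.dist z w = j} * P j := by
    intro x z
    rw [← sum_fiberwise_of_maps_to (g := fun w => G.dist z w) (t := range (d + 1))
      fun w _ => mem_range.2 (Nat.lt_succ_of_le (hG.dist_le z w))]
    refine sum_congr rfl fun j _ => ?_
    rw [filter_filter, sum_congr rfl fun w hw => (hP w z).trans
      (by rw [dist_comm, (mem_filter.1 hw).2.2]), sum_const, smul_eq_mul]
  intro x z x' z' h
  dsimp only
  rw [key, key]
  refine sum_congr rfl fun j _ => ?_
  rw [hG.card_adj_dist (u := z) rfl, hG.card_adj_dist (u := z') rfl, dist_comm, h, dist_comm]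

/-- Counting the pairs `(w, y)` with `w ~ x`, `dist w y = l`, `dist z y = i` in two ways. -/
theorem sum_adj_interCount (hG : IsDistRegular G d b c) (hl : 1 ≤ l) (i : ℕ) (x z : V) :
    ∑ w with G.Adj x w, G.interCount l i w z =
      b (l - 1) * G.interCount (l - 1) i x z + (b 0 - b l - c l) * G.interCount l i x z +
        c (l + 1) * G.interCount (l + 1) i x z := by
  simp only [interCount, card_filter, mul_sum, ← sum_add_distrib]
  rw [sum_comm]
  refine sum_congr rfl fun y _ => ?_
  by_cases hzy : G.dist z y = i
  · have key := hG.card_adj_dist (u := y) (v := x) rfl l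
    simp only [hzy, and_true]
    rw [← card_filter, filter_filter]
    simp only [dist_comm (u := y)] at key
    rw [key]
    generalize G.dist x y = m
    split_ifs <;> first | omega | (subst_vars; simp)
  · simp [hzy]

theorem distInvariant_interCount (hG : IsDistRegular G d b c) (l i : ℕ) :
    G.DistInvariant (G.interCount l i) := by
  induction l using Nat.strong_induction_on with
  | _ l ih =>
    intro x z x' z' h
    rcases l with _ | _ | l
    · have hzero : ∀ x z, G.interCount 0 i x z = if G.dist z x = i then 1 else 0 := by
        intro x z
        simp only [interCount, hG.connected.dist_eq_zero_iff]
        rw [filter_and, filter_eq, if_pos (mem_univ _)]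
        split_ifs <;> simp_all
      rw [hzero, hzero, G.dist_comm, h, G.dist_comm]
    · have hone : ∀ x z, G.interCount 1 i x z = #{y | G.Adj x y ∧ G.dist z y = i} := by
        simp [interCount]
      rw [hone, hone, hG.card_adj_dist rfl, hG.card_adj_dist rfl, G.dist_comm, h, G.dist_comm]
    by_cases hld : l + 2 ≤ d
    · -- the recursion at `l + 1` determines `interCount (l + 2)` since `c (l + 2) ≠ 0`
      have e := hG.sum_adj_interCount (l := l + 1) (by omega) i x z
      have e' := hG.sum_adj_interCount (l := l + 1) (by omega) i x' z'
      have hsum := hG.distInvariant_sum_adj (ih (l + 1) (by omega)) h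
      dsimp only at hsum
      rw [hsum, Nat.add_sub_cancel, ih l (by omega) h, ih (l + 1) (by omega) h] at e
      rw [Nat.add_sub_cancel] at e'
      exact Nat.eq_of_mul_eq_mul_left (hG.c_pos (j := l + 1 + 1) (by omega) hld) (by omega)
    · have hzero : ∀ x z, G.interCount (l + 2) i x z = 0 := fun x z =>
        card_eq_zero.2 (filter_eq_empty_iff.2 fun y _ ⟨hxy, _⟩ => by
          have := hG.dist_le x y
          omega)
      rw [hzero, hzero]

theorem reachable_distGraph_of_dist_eq (hG : IsDistRegular G d b c)
    (h : (distGraph G i).Reachable u v) (hxy : G.dist x y = G.dist u v) :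
    (distGraph G i).Reachable x y := by
  obtain ⟨p⟩ := h
  induction p generalizing x y with
  | nil =>
    rw [SimpleGraph.dist_self, hG.connected.dist_eq_zero_iff] at hxy
    exact hxy ▸ .rfl
  | @cons u w v huw p ih =>
    obtain ⟨hne, hdist⟩ := huw
    have hpos : 0 < G.interCount i (G.dist w v) x y := by
      rw [hG.distInvariant_interCount i _ hxy]
      exact card_pos.2 ⟨w, by simp [hdist, G.dist_comm]⟩
    obtain ⟨s, hs⟩ := card_pos.1 hpos
    simp only [mem_filter, mem_univ, true_and] at hs
    have hxs : (distGraph G i).Adj x s := by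
      refine ⟨fun hxs => hne ?_, hs.1⟩
      rw [← hG.connected.dist_eq_zero_iff, hdist, ← hs.1, hxs, SimpleGraph.dist_self]
    exact hxs.reachable.trans (ih (by rw [G.dist_comm, hs.2]))

theorem exists_reachable_distGraph_iff_dvd (hG : IsDistRegular G d b c) (hi : 1 ≤ i)
    (hid : i ≤ d) (hdisc : ¬ (distGraph G i).Connected) :
    ∃ t, 2 ≤ t ∧ t ≤ d ∧ ∀ x y, (distGraph G i).Reachable x y ↔ t ∣ G.dist x y := by
  have hex : ∃ j, 0 < j ∧ ∃ x y, (distGraph G i).Reachable x y ∧ G.dist x y = j := by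
    obtain ⟨x, y, hxy⟩ := hG.exists_dist_eq hid
    refine ⟨i, hi, x, y, Adj.reachable ⟨fun h => ?_, hxy⟩, hxy⟩
    rw [h, SimpleGraph.dist_self] at hxy
    omega
  obtain ⟨ht, x₀, y₀, hr₀, hd₀⟩ := Nat.find_spec hex
  have hstep : ∀ x y, G.dist x y = Nat.find hex → (distGraph G i).Reachable x y :=
    fun x y h => hG.reachable_distGraph_of_dist_eq hr₀ (h.trans hd₀.symm)
  have hiff : ∀ x y, (distGraph G i).Reachable x y ↔ Nat.find hex ∣ G.dist x y := fun x y =>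
    ⟨hG.connected.dvd_dist_of_reachable ht hstep fun x y hxy hpos =>
      Nat.find_min' hex ⟨hpos, x, y, hxy, rfl⟩, hG.connected.reachable_of_dvd_dist hstep⟩
  refine ⟨Nat.find hex, ?_, hd₀ ▸ hG.dist_le x₀ y₀, hiff⟩
  by_contra! h1
  have h1 : Nat.find hex = 1 := by omega
  exact hdisc ((connected_iff _).2
    ⟨fun x y => (hiff x y).2 (h1 ▸ one_dvd _), hG.connected.nonempty⟩)

theorem b_zero_le_two_of_dvd_dist_transitive (hG : IsDistRegular G d b c) (ht : 3 ≤ t)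
    (htd : t < d)
    (htrans : ∀ x y z : V, t ∣ G.dist x y → t ∣ G.dist y z → t ∣ G.dist x z) :
    b 0 ≤ 2 := by
  have hle : ∀ x y : V, #{w | G.Adj y w ∧ G.dist x w = t} ≤ 1 := by
    intro x y
    refine card_le_one.2 fun w₁ hw₁ w₂ hw₂ => ?_
    simp only [mem_filter, mem_univ, true_and] at hw₁ hw₂
    have hdvd := htrans w₁ x w₂ (by rw [G.dist_comm, hw₁.2]) (by rw [hw₂.2])
    have := hG.connected.dist_triangle (u := w₁) (v := y) (w := w₂)
    rw [dist_eq_one_iff_adj.2 hw₁.1.symm, dist_eq_one_iff_adj.2 hw₂.1] at this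
    exact hG.connected.dist_eq_zero_iff.1 (Nat.eq_zero_of_dvd_of_lt hdvd (by omega))
  obtain ⟨x, y, hxy⟩ := hG.exists_dist_eq htd.le
  have hsame : #{w | G.Adj y w ∧ G.dist x w = t} = 0 := by
    refine card_eq_zero.2 (filter_eq_empty_iff.2 fun w _ ⟨hyw, hxw⟩ => ?_)
    have := htrans y x w (by rw [G.dist_comm, hxy]) (by rw [hxw])
    rw [dist_eq_one_iff_adj.2 hyw] at this
    have := Nat.le_of_dvd one_pos this
    omega
  rw [hG.card_adj_dist hxy, if_neg (by omega), if_pos rfl] at hsame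
  obtain ⟨x₁, y₁, hxy₁⟩ := hG.exists_dist_eq (show t + 1 ≤ d by omega)
  have hc := hle x₁ y₁
  rw [← Nat.add_sub_cancel t 1, hG.card_adj_dist_pred hxy₁] at hc
  obtain ⟨x₂, y₂, hxy₂⟩ := hG.exists_dist_eq (show t - 1 ≤ d by omega)
  have hb := hle x₂ y₂
  rw [← Nat.sub_add_cancel (show 1 ≤ t by omega), hG.card_adj_dist_succ hxy₂] at hb
  have := hG.c_le_succ (j := t) (by omega) htd
  have := hG.b_succ_le (j := t - 1) (by omega)
  rw [Nat.sub_add_cancel (show 1 ≤ t by omega)] at this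
  omega

end IsDistRegular

theorem smith_theorem_general {V : Type*} [Fintype V] (G : SimpleGraph V)
    (d : ℕ) (b c : ℕ → ℕ) (k : ℕ) (hk3 : 3 ≤ k)
    (hG : IsDistRegular G d b c) (hk : b 0 = k)
    (himprimitive : ∃ i : ℕ, 1 ≤ i ∧ i ≤ d ∧ ¬ (distGraph G i).Connected) :
    G.Colorable 2 ∨ Equivalence (fun u v : V => u = v ∨ G.dist u v = d) := by
  obtain ⟨i, hi, hid, hdisc⟩ := himprimitive
  obtain ⟨t, ht, htd, hreach⟩ := hG.exists_reachable_distGraph_iff_dvd hi hid hdisc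
  have htrans : ∀ x y z : V, t ∣ G.dist x y → t ∣ G.dist y z → t ∣ G.dist x z :=
    fun x y z hxy hyz => (hreach x z).1 (((hreach x y).2 hxy).trans ((hreach y z).2 hyz))
  rcases htd.eq_or_lt with rfl | htd
  · right
    rw [← hG.diam_eq] at htrans ⊢
    exact hG.connected.equivalence_eq_or_dist_eq_diam htrans
  rcases ht.eq_or_lt with rfl | ht
  · obtain ⟨x, u, hxu⟩ := hG.exists_dist_eq (show 3 ≤ d by omega)
    exact .inl (hG.connected.colorable_two_of_even_dist_transitive hxu htrans)
  · have := hG.b_zero_le_two_of_dvd_dist_transitive ht htd htrans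
    omega

/-- **Smith's theorem.**  Let `G` be a distance-regular graph of diameter `d ≥ 2` with
valency `k ≥ 3` which is imprimitive, i.e. some distance-`i` graph (`1 ≤ i ≤ d`) is
disconnected.  Then `G` is bipartite or antipodal (the relation "equal or at distance
`d`" is an equivalence relation). -/
theorem smith_theorem {V : Type*} [Fintype V] (G : SimpleGraph V)
    (d : ℕ) (b c : ℕ → ℕ) (k : ℕ) (hd : 2 ≤ d) (hk3 : 3 ≤ k)
    (hG : IsDistRegular G d b c) (hk : b 0 = k)
    (himprimitive : ∃ i : ℕ, 1 ≤ i ∧ i ≤ d ∧ ¬ (distGraph G i).Connected) :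
    G.Colorable 2 ∨ Equivalence (fun u v : V => u = v ∨ G.dist u v = d) :=
  smith_theorem_general G d b c k hk3 hG hk himprimitive
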